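/- Let Λ be a compact metric space, X a complete metric space, and S_λ(·,·), λ ∈ Λ, a family of processes on X, each with uniform attractor 𝔸_λ. Suppose there exists a compact set K ⊆ X such that: (a) for every bounded B ⊆ X and each λ there exists t_{B,λ} with S_λ(t+s,s)B ⊆ K for all t ≥ t_{B,λ} and s ∈ ℝ; (b) for each t > 0 the map λ ↦ S_λ(t+s,s)x is continuous uniformly for s ∈ ℝ and x ∈ K; and (U4) there exists T₀ ≥ 0 such that S_λ(t+s,s)K ⊆ K for all t ≥ T₀, all λ ∈ Λ and all s ∈ ℝ. If the map λ ↦ 𝔸_λ is continuous on Λ with respect to the Hausdorff metric, then the family is uniformly equi-attracting: lim_{t→∞} sup_{λ∈Λ, s∈ℝ} ρ_X(S_λ(t+s,s)K, 𝔸_λ) = 0. -/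

import Mathlib

/-!
Fix `ε > 0`. For each `λ₀`, attraction of `K` by `𝔸_{λ₀}` gives a time `τ` after which
`S_{λ₀}(τ + s, s)K` lies within `ε/3` of `𝔸_{λ₀}`. By (U4), after time `T₀` every orbit starting
in `K` is back in `K`, so for `t ≥ T₀ + τ` one can write `S_λ(t + s, s)x = S_λ(τ + s', s')y` with
`y ∈ K`. For `λ` near `λ₀`, continuity in `λ` at the fixed time `τ` moves this point by less than
`ε/3` from `S_{λ₀}(τ + s', s')y`, and continuity of `λ ↦ 𝔸_λ` moves the attractor by less than
`ε/3`. This gives the estimate on a neighbourhood of `λ₀` for all `t ≥ T₀ + τ`, and compactness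
of `Λ` makes the time uniform.
-/

open Filter Topology Metric Bornology

/-- A process on a metric space `X`: a two-parameter family `S t s : X → X` (`t ≥ s`)
with `S t t = id`, `S t τ ∘ S τ s = S t s` for `t ≥ τ ≥ s`, and `(t, s, x) ↦ S t s x`
continuous on the region `s ≤ t`. -/
def IsProcess {X : Type*} [MetricSpace X] (S : ℝ → ℝ → X → X) : Prop :=
  (∀ t : ℝ, S t t = id) ∧
  (∀ t τ s : ℝ, s ≤ τ → τ ≤ t → S t τ ∘ S τ s = S t s) ∧
  ContinuousOn (fun p : ℝ × ℝ × X => S p.1 p.2.1 p.2.2) {p : ℝ × ℝ × X | p.2.1 ≤ p.1}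

/-- `A` uniformly attracts every bounded set under the process `S`:
`lim_{t→∞} sup_{s∈ℝ} ρ_X(S(t+s,s)B, A) = 0` for every bounded `B`. -/
def UniformlyAttracts {X : Type*} [MetricSpace X] (S : ℝ → ℝ → X → X) (A : Set X) :
    Prop :=
  ∀ B : Set X, IsBounded B → ∀ ε : ℝ, 0 < ε → ∃ T : ℝ, ∀ t ≥ T, ∀ s : ℝ, ∀ x ∈ B,
    EMetric.infEdist (S (t + s) s x) A < ENNReal.ofReal ε

/-- A uniform attractor for the process `S`: the minimal compact set that uniformly
attracts every bounded set. -/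
def IsUniformAttractor {X : Type*} [MetricSpace X] (S : ℝ → ℝ → X → X) (A : Set X) :
    Prop :=
  IsCompact A ∧ UniformlyAttracts S A ∧
  ∀ C : Set X, IsCompact C → UniformlyAttracts S C → A ⊆ C

theorem Filter.Eventually.forall_of_compactSpace {Λ Y : Type*} [TopologicalSpace Λ]
    [CompactSpace Λ] {l : Filter Y} {P : Λ → Y → Prop}
    (h : ∀ l₀, ∀ᶠ p in 𝓝 l₀ ×ˢ l, P p.1 p.2) : ∀ᶠ y in l, ∀ x, P x y := by
  have := isCompact_univ.mem_nhdsSet_prod_of_forall fun x _ => h x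
  rw [nhdsSet_univ, top_prod] at this
  exact (eventually_comap.1 this).mono fun y hy x => hy (x, y) rfl

theorem nonempty_of_infEDist_lt {X : Type*} [MetricSpace X] {x : X} {s : Set X}
    {r : ENNReal} (h : infEDist x s < r) : s.Nonempty := by
  rw [Set.nonempty_iff_ne_empty, Ne, ← infEDist_eq_top_iff (x := x)]
  exact (h.trans_le le_top).ne

theorem infEDist_lt_ofReal_add_add {X : Type*} [MetricSpace X] {z z' : X} {A A' : Set X}
    (hA : IsBounded A) (hA' : IsBounded A') (hAne : A.Nonempty) {a b c : ℝ}
    (hz : dist z z' < a) (hz' : infEDist z' A' < ENNReal.ofReal b)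
    (hAA' : hausdorffDist A A' < c) :
    infEDist z A < ENNReal.ofReal (a + b + c) := by
  have hfin := hausdorffEDist_ne_top_of_nonempty_of_bounded
    (nonempty_of_infEDist_lt hz') hAne hA' hA
  have hA'A : hausdorffEDist A' A < ENNReal.ofReal c := by
    rwa [ENNReal.lt_ofReal_iff_toReal_lt hfin, ← hausdorffDist, hausdorffDist_comm]
  have ha : 0 ≤ a := dist_nonneg.trans hz.le
  have hb : 0 ≤ b := by
    by_contra! hb
    simp [ENNReal.ofReal_of_nonpos hb.le] at hz'
  calc infEDist z A ≤ edist z z' + infEDist z' A' + hausdorffEDist A' A := by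
        grw [infEDist_le_infEDist_add_hausdorffEDist, infEDist_le_edist_add_infEDist]
    _ < ENNReal.ofReal a + ENNReal.ofReal b + ENNReal.ofReal c := by
        rw [← edist_lt_ofReal] at hz
        exact ENNReal.add_lt_add (ENNReal.add_lt_add hz hz') hA'A
    _ = ENNReal.ofReal (a + b + c) := by
        rw [ENNReal.ofReal_add (add_nonneg ha hb) (hausdorffDist_nonneg.trans hAA'.le),
          ENNReal.ofReal_add ha hb]

theorem IsProcess.apply_apply {X : Type*} [MetricSpace X] {S : ℝ → ℝ → X → X}
    (hS : IsProcess S) {t τ s : ℝ} (hsτ : s ≤ τ) (hτt : τ ≤ t) (x : X) :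
    S t τ (S τ s x) = S t s x :=
  congrFun (hS.2.1 t τ s hsτ hτt) x

theorem UniformlyAttracts.nonempty {X : Type*} [MetricSpace X] {S : ℝ → ℝ → X → X}
    {A : Set X} (hA : UniformlyAttracts S A) (x : X) : A.Nonempty := by
  obtain ⟨T, hT⟩ := hA {x} isBounded_singleton 1 one_pos
  exact nonempty_of_infEDist_lt (hT T le_rfl 0 x rfl)

theorem eventually_nhds_prod_atTop_infEDist_lt {Λ X : Type*} [TopologicalSpace Λ]
    [MetricSpace X] {S : Λ → ℝ → ℝ → X → X} (hproc : ∀ l, IsProcess (S l)) {A : Λ → Set X}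
    (hA : ∀ l, IsUniformAttractor (S l) (A l)) {K : Set X} (hK : IsBounded K) {T₀ : ℝ}
    (hT₀ : 0 ≤ T₀) (hinv : ∀ t ≥ T₀, ∀ l, ∀ s, S l (t + s) s '' K ⊆ K) {l₀ : Λ}
    (hS_cont : ∀ t > 0, ∀ ε > 0, ∀ᶠ l in 𝓝 l₀, ∀ s, ∀ x ∈ K,
      dist (S l (t + s) s x) (S l₀ (t + s) s x) < ε)
    (hA_cont : ∀ ε > 0, ∀ᶠ l in 𝓝 l₀, hausdorffDist (A l) (A l₀) < ε) {ε : ℝ} (hε : 0 < ε) :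
    ∀ᶠ p in 𝓝 l₀ ×ˢ atTop, ∀ s, ∀ x ∈ K,
      infEDist (S p.1 (p.2 + s) s x) (A p.1) < ENNReal.ofReal ε := by
  have hε3 : 0 < ε / 3 := by positivity
  obtain ⟨T, hT⟩ := (hA l₀).2.1 K hK (ε / 3) hε3
  set τ := max T 1
  have hτ : 0 < τ := lt_max_of_lt_right one_pos
  filter_upwards
    [((hS_cont τ hτ _ hε3).and (hA_cont _ hε3)).prod_mk (eventually_ge_atTop (T₀ + τ))]
    with ⟨l, t⟩ ⟨⟨hS_near, hA_near⟩, ht⟩ s x hx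
  set s' := t - τ + s
  have hy : S l s' s x ∈ K := hinv (t - τ) (by linarith) l s ⟨x, hx, rfl⟩
  have hflow : S l (τ + s') s' (S l s' s x) = S l (t + s) s x := by
    rw [show τ + s' = t + s by ring]
    exact (hproc l).apply_apply (by linarith) (by linarith) x
  rw [← hflow, ← add_thirds ε]
  exact infEDist_lt_ofReal_add_add (hA l).1.isBounded (hA l₀).1.isBounded
    ((hA l).2.1.nonempty x) (hS_near s' _ hy) (hT τ (le_max_left _ _) s' _ hy) hA_near

theorem stmt16_general {Λ X : Type*} [MetricSpace Λ] [CompactSpace Λ]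
    [MetricSpace X]
    (S : Λ → ℝ → ℝ → X → X) (hproc : ∀ l : Λ, IsProcess (S l))
    (A : Λ → Set X) (hA : ∀ l : Λ, IsUniformAttractor (S l) (A l))
    (K : Set X) (hK : IsCompact K)
    -- (b): continuity in `λ`, uniformly for `s ∈ ℝ` and `x ∈ K`
    (hunif : ∀ t : ℝ, 0 < t → ∀ l₀ : Λ, ∀ ε : ℝ, 0 < ε → ∃ δ : ℝ, 0 < δ ∧
      ∀ l : Λ, dist l l₀ < δ → ∀ s : ℝ, ∀ x ∈ K,
        dist (S l (t + s) s x) (S l₀ (t + s) s x) < ε)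
    -- (U4): `K` is uniformly positively invariant after time `T₀`
    (T₀ : ℝ) (hT₀ : 0 ≤ T₀)
    (hU4 : ∀ t ≥ T₀, ∀ l : Λ, ∀ s : ℝ, S l (t + s) s '' K ⊆ K)
    -- continuity of `λ ↦ 𝔸_λ` on all of `Λ`
    (hcont : ∀ l₀ : Λ, ∀ ε : ℝ, 0 < ε → ∃ δ : ℝ, 0 < δ ∧ ∀ l : Λ, dist l l₀ < δ →
      hausdorffDist (A l) (A l₀) < ε) :
    -- uniform equi-attraction
    ∀ ε : ℝ, 0 < ε → ∃ T : ℝ, ∀ t ≥ T, ∀ l : Λ, ∀ s : ℝ, ∀ x ∈ K,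
      EMetric.infEdist (S l (t + s) s x) (A l) < ENNReal.ofReal ε := by
  intro ε hε
  have hlocal (l₀ : Λ) := eventually_nhds_prod_atTop_infEDist_lt hproc hA hK.isBounded hT₀ hU4
    (fun t ht ε hε => Metric.eventually_nhds_iff.2 (hunif t ht l₀ ε hε))
    (fun ε hε => Metric.eventually_nhds_iff.2 (hcont l₀ ε hε)) hε
  exact eventually_atTop.1 (Eventually.forall_of_compactSpace hlocal)

/-- On a compact parameter space, if the map `λ ↦ 𝔸_λ` is continuous in the
Hausdorff metric and (U4) holds (`K` uniformly re-enters itself after time `T₀`),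
then the family is uniformly equi-attracting. -/
theorem stmt16 {Λ X : Type*} [MetricSpace Λ] [CompactSpace Λ]
    [MetricSpace X] [CompleteSpace X]
    (S : Λ → ℝ → ℝ → X → X) (hproc : ∀ l : Λ, IsProcess (S l))
    (A : Λ → Set X) (hA : ∀ l : Λ, IsUniformAttractor (S l) (A l))
    (K : Set X) (hK : IsCompact K)
    -- (a): `K` uniformly absorbs every bounded set
    (habs : ∀ B : Set X, IsBounded B → ∀ l : Λ, ∃ tB : ℝ, ∀ t ≥ tB, ∀ s : ℝ,
      ∀ x ∈ B, S l (t + s) s x ∈ K)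
    -- (b): continuity in `λ`, uniformly for `s ∈ ℝ` and `x ∈ K`
    (hunif : ∀ t : ℝ, 0 < t → ∀ l₀ : Λ, ∀ ε : ℝ, 0 < ε → ∃ δ : ℝ, 0 < δ ∧
      ∀ l : Λ, dist l l₀ < δ → ∀ s : ℝ, ∀ x ∈ K,
        dist (S l (t + s) s x) (S l₀ (t + s) s x) < ε)
    -- (U4): `K` is uniformly positively invariant after time `T₀`
    (T₀ : ℝ) (hT₀ : 0 ≤ T₀)
    (hU4 : ∀ t ≥ T₀, ∀ l : Λ, ∀ s : ℝ, S l (t + s) s '' K ⊆ K)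
    -- continuity of `λ ↦ 𝔸_λ` on all of `Λ`
    (hcont : ∀ l₀ : Λ, ∀ ε : ℝ, 0 < ε → ∃ δ : ℝ, 0 < δ ∧ ∀ l : Λ, dist l l₀ < δ →
      hausdorffDist (A l) (A l₀) < ε) :
    -- uniform equi-attraction
    ∀ ε : ℝ, 0 < ε → ∃ T : ℝ, ∀ t ≥ T, ∀ l : Λ, ∀ s : ℝ, ∀ x ∈ K,
      EMetric.infEdist (S l (t + s) s x) (A l) < ENNReal.ofReal ε :=
  stmt16_general S hproc A hA K hK hunif T₀ hT₀ hU4 hcont
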